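/- arXiv:1106.3012 — 3 statements merged into one kernel-verified Lean document; each statement's English description precedes it below -/
import Mathlib

section
/- Let M be a right A-algebra and k ≥ 0. Then I_M(k) = ⋂_{i=0}^{k} im Sq^{2^{i+1}−1} is a two-sided ideal of the algebra Δ_M(k) = ⋂_{i=0}^{k} ker Sq^{2^i}. -/
noncomputable section

open FreeAlgebra

/-- The defining relations of the mod-2 Steenrod algebra: `Sq⁰ = 1` and the
Adem relations `Sq^a Sq^b = Σ_c C(b−c−1, a−2c) Sq^{a+b−c} Sq^c` for `0 < a < 2b`. -/
inductive AdemRel : FreeAlgebra (ZMod 2) ℕ → FreeAlgebra (ZMod 2) ℕ → Prop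
  | sq_zero : AdemRel (ι (ZMod 2) 0) 1
  | adem (a b : ℕ) (h0 : 0 < a) (h : a < 2 * b) :
      AdemRel (ι (ZMod 2) a * ι (ZMod 2) b)
        (∑ c ∈ Finset.range (a / 2 + 1),
          (Nat.choose (b - c - 1) (a - 2 * c) : ZMod 2) •
            (ι (ZMod 2) (a + b - c) * ι (ZMod 2) c))

/-- The mod-2 Steenrod algebra. -/
abbrev Steenrod : Type := RingQuot AdemRel

/-- The Steenrod square `Sq^n`. -/
def Sq (n : ℕ) : Steenrod := RingQuot.mkRingHom AdemRel (ι (ZMod 2) n)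


lemma sqA (n : ℕ) : Sq n = RingQuot.mkAlgHom (ZMod 2) AdemRel (ι (ZMod 2) n) := by
  rw [Sq, ← RingQuot.mkAlgHom_coe (ZMod 2)]; rfl

lemma sq_zero_eq : Sq 0 = 1 := by
  rw [sqA]
  exact (RingQuot.mkAlgHom_rel (ZMod 2) AdemRel.sq_zero).trans (map_one _)

lemma sq_adem (a b : ℕ) (h0 : 0 < a) (h : a < 2 * b) :
    Sq a * Sq b = ∑ c ∈ Finset.range (a / 2 + 1),
      ((Nat.choose (b - c - 1) (a - 2 * c) : ZMod 2)) • (Sq (a + b - c) * Sq c) := by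
  have h1 := RingQuot.mkAlgHom_rel (ZMod 2) (AdemRel.adem a b h0 h)
  simp only [map_sum, map_smul, map_mul] at h1
  simpa [sqA] using h1

lemma sq_adem_zero (n : ℕ) (hn : 0 < n) : Sq (2 * n - 1) * Sq n = 0 := by
  rw [sq_adem (2 * n - 1) n (by omega) (by omega)]
  apply Finset.sum_eq_zero
  intro c hc
  rw [Finset.mem_range] at hc
  have hc' : c < n := by omega
  have h0 : Nat.choose (n - c - 1) (2 * n - 1 - 2 * c) = 0 :=
    Nat.choose_eq_zero_of_lt (by omega)
  rw [h0]; simp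

lemma choose_pow_sub_one_odd : ∀ j m : ℕ, m < 2 ^ j → (2 ^ j - 1).choose m % 2 = 1 := by
  intro j
  induction j with
  | zero => intro m hm; interval_cases m; rfl
  | succ j ih =>
    intro m hm
    have h2 : 2 ^ (j + 1) = 2 * 2 ^ j := by rw [pow_succ]; ring
    have h3 : 1 ≤ 2 ^ j := Nat.one_le_two_pow
    have key : (2 ^ (j + 1) - 1).choose m % 2
        = (Nat.choose ((2 ^ (j + 1) - 1) % 2) (m % 2) *
           Nat.choose ((2 ^ (j + 1) - 1) / 2) (m / 2)) % 2 :=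
      Choose.choose_modEq_choose_mod_mul_choose_div_nat
    have e1 : (2 ^ (j + 1) - 1) % 2 = 1 := by omega
    have e2 : (2 ^ (j + 1) - 1) / 2 = 2 ^ j - 1 := by omega
    rw [e1, e2] at key
    have e3 : Nat.choose 1 (m % 2) = 1 := by
      have : m % 2 = 0 ∨ m % 2 = 1 := by omega
      rcases this with h | h <;> rw [h] <;> rfl
    rw [key, e3, one_mul]
    exact ih _ (by omega)

lemma vanish {M : Type*} [Ring M] [Algebra (ZMod 2) M]
    (act : M →ₗ[ZMod 2] Steenrod →ₗ[ZMod 2] M)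
    (hmul : ∀ (x : M) (a b : Steenrod), act x (a * b) = act (act x a) b)
    (y : M) (k : ℕ) (hy : ∀ j ≤ k, act y (Sq (2 ^ j)) = 0) :
    ∀ n, 0 < n → n < 2 ^ (k + 1) → act y (Sq n) = 0 := by
  intro n
  induction n using Nat.strong_induction_on with
  | _ n ih =>
  intro hn hnk
  by_cases hpow : ∃ j, n = 2 ^ j
  · obtain ⟨j, rfl⟩ := hpow
    refine hy j ?_
    have := (Nat.pow_lt_pow_iff_right (a := 2) (by norm_num)).mp hnk
    omega
  · set j := Nat.log 2 n with hj
    have h1 : 2 ^ j ≤ n := Nat.pow_log_le_self 2 (by omega)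
    have h2 : n < 2 ^ (j + 1) := Nat.lt_pow_succ_log_self (by norm_num) n
    have hne : n ≠ 2 ^ j := fun h => hpow ⟨j, h⟩
    set m := n - 2 ^ j with hmdef
    have h2j : 2 ^ (j + 1) = 2 * 2 ^ j := by rw [pow_succ]; ring
    have hm0 : 0 < m := by omega
    have hm1 : m < 2 ^ j := by omega
    have hterm : ∀ p c : ℕ, 0 < p → p < n → act y (Sq p * Sq c) = 0 := by
      intro p c hp hpn
      rw [hmul, ih p hpn hp (lt_trans hpn hnk), map_zero, LinearMap.zero_apply]
    have adem := sq_adem m (2 ^ j) hm0 (by omega)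
    have hE : Sq m * Sq (2 ^ j)
        = (∑ c ∈ Finset.range (m / 2),
            ((Nat.choose (2 ^ j - (c + 1) - 1) (m - 2 * (c + 1)) : ZMod 2)) •
              (Sq (m + 2 ^ j - (c + 1)) * Sq (c + 1))) + Sq n := by
      rw [adem, Finset.sum_range_succ']
      congr 1
      have hcoef : ((Nat.choose (2 ^ j - 0 - 1) (m - 2 * 0) : ZMod 2)) = 1 := by
        simp only [Nat.sub_zero, Nat.mul_zero]
        rw [← ZMod.natCast_mod, choose_pow_sub_one_odd j m hm1]
        exact Nat.cast_one
      rw [hcoef, one_smul, sq_zero_eq, mul_one]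
      congr 1
      omega
    have h0 : act y (Sq m * Sq (2 ^ j)) = 0 := hterm m (2 ^ j) hm0 (by omega)
    rw [hE, map_add, map_sum] at h0
    have hz : ∀ c ∈ Finset.range (m / 2),
        act y (((Nat.choose (2 ^ j - (c + 1) - 1) (m - 2 * (c + 1)) : ZMod 2)) •
          (Sq (m + 2 ^ j - (c + 1)) * Sq (c + 1))) = 0 := by
      intro c hc
      rw [Finset.mem_range] at hc
      rw [map_smul, hterm (m + 2 ^ j - (c + 1)) (c + 1) (by omega) (by omega), smul_zero]
    rwa [Finset.sum_eq_zero hz, zero_add] at h0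

/-- Let `M` be a right `A`-algebra and `k ≥ 0`.  Then
`I_M(k) = ⋂_{i=0}^k im Sq^{2^{i+1}−1}` is a two-sided ideal of the algebra
`Δ_M(k) = ⋂_{i=0}^k ker Sq^{2^i}`: it is an additive subgroup contained in
`Δ_M(k)` which absorbs multiplication by `Δ_M(k)` on both sides. -/
theorem stmt_11 (M : Type*) [Ring M] [Algebra (ZMod 2) M]
    (act : M →ₗ[ZMod 2] Steenrod →ₗ[ZMod 2] M)
    (hone : ∀ x : M, act x 1 = x)
    (hmul : ∀ (x : M) (a b : Steenrod), act x (a * b) = act (act x a) b)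
    (hcartan : ∀ (x y : M) (n : ℕ),
      act (x * y) (Sq n) =
        ∑ p ∈ Finset.range (n + 1), act x (Sq p) * act y (Sq (n - p)))
    (hunit : ∀ n : ℕ, 0 < n → act (1 : M) (Sq n) = 0)
    (k : ℕ) :
    letI Delta : Set M := {x : M | ∀ i ≤ k, act x (Sq (2 ^ i)) = 0}
    letI I : Set M :=
      {x : M | ∀ i ≤ k, ∃ z : M, act z (Sq (2 ^ (i + 1) - 1)) = x}
    I ⊆ Delta ∧ (0 : M) ∈ I ∧
      (∀ x ∈ I, ∀ x' ∈ I, x + x' ∈ I) ∧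
      (∀ x ∈ I, ∀ y ∈ Delta, x * y ∈ I ∧ y * x ∈ I) := by
  refine ⟨?_, ?_, ?_, ?_⟩
  · -- I ⊆ Delta
    intro x hx i hi
    obtain ⟨z, hz⟩ := hx i hi
    rw [← hz, ← hmul]
    have hzero : Sq (2 ^ (i + 1) - 1) * Sq (2 ^ i) = 0 := by
      have h := sq_adem_zero (2 ^ i) (by positivity)
      have h2 : 2 * 2 ^ i - 1 = 2 ^ (i + 1) - 1 := by rw [pow_succ, mul_comm]
      rwa [h2] at h
    rw [hzero, map_zero]
  · -- 0 ∈ I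
    intro i _
    exact ⟨0, by rw [map_zero, LinearMap.zero_apply]⟩
  · -- additive
    intro x hx x' hx' i hi
    obtain ⟨z, hz⟩ := hx i hi
    obtain ⟨z', hz'⟩ := hx' i hi
    exact ⟨z + z', by rw [map_add, LinearMap.add_apply, hz, hz']⟩
  · -- multiplicative
    intro x hx y hy
    have hyv : ∀ p : ℕ, 0 < p → p < 2 ^ (k + 1) → act y (Sq p) = 0 :=
      vanish act hmul y k hy
    have hbound : ∀ i ≤ k, 2 ^ (i + 1) ≤ 2 ^ (k + 1) := fun i hi =>
      Nat.pow_le_pow_right (by norm_num) (by omega)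
    constructor
    · intro i hi
      obtain ⟨z, hz⟩ := hx i hi
      refine ⟨z * y, ?_⟩
      rw [hcartan]
      have hm1 : 1 ≤ 2 ^ (i + 1) := Nat.one_le_two_pow
      have heq : 2 ^ (i + 1) - 1 - 1 + 1 = 2 ^ (i + 1) - 1 ∨ 2 ^ (i+1) - 1 = 0 := by omega
      rw [show 2 ^ (i + 1) - 1 + 1 = (2 ^ (i + 1) - 1) + 1 from rfl, Finset.sum_range_succ]
      rw [Finset.sum_eq_zero, zero_add, Nat.sub_self, sq_zero_eq, hone, hz]
      intro p hp
      rw [Finset.mem_range] at hp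
      have := hbound i hi
      rw [hyv (2 ^ (i + 1) - 1 - p) (by omega) (by omega), mul_zero]
    · intro i hi
      obtain ⟨z, hz⟩ := hx i hi
      refine ⟨y * z, ?_⟩
      rw [hcartan, Finset.sum_range_succ']
      have := hbound i hi
      have hm1 : 1 ≤ 2 ^ (i + 1) := Nat.one_le_two_pow
      rw [Finset.sum_eq_zero, zero_add, Nat.sub_zero, sq_zero_eq, hone, hz]
      intro p hp
      rw [Finset.mem_range] at hp
      rw [hyv (p + 1) (by omega) (by omega), zero_mul]
end
end

section
/- With Γ as above, if x = Σ_{i≥1} [i]·x_i ∈ Γ_s (s ≥ 2) satisfies xSq^2 = 0, then for each m ≥ 1: x_{4m−2}Sq^1 = x_{4m−3}Sq^2, x_{4m} = x_{4m−2}Sq^2, x_{4m+1} = x_{4m−1}Sq^2 + x_{4m}Sq^1, and x_{4m}Sq^2 = 0. -/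
noncomputable section

/-- `Γ`: the free associative F₂-algebra on non-commuting generators `[a]`,
modelled as the monoid algebra of the free monoid on ℕ (only letters `a ≥ 1`
are used; the Steenrod action never produces the letter `0` from them). -/
abbrev Gam : Type := MonoidAlgebra (ZMod 2) (FreeMonoid ℕ)

/-- The generator `[a]` of `Γ`. -/
def gen (a : ℕ) : Gam := MonoidAlgebra.single (FreeMonoid.ofList [a]) 1

/-- The right Steenrod action on a word, defined on generators by
`[a]Sq^i = C(a−i, i)·[a−i]` (mod 2) and extended by the Cartan formula. -/
def sqWord : List ℕ → ℕ → Gam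
  | [], n => if n = 0 then 1 else 0
  | a :: w, n =>
      ∑ p ∈ Finset.range (n + 1),
        (Nat.choose (a - p) p : ZMod 2) • (gen (a - p) * sqWord w (n - p))

/-- The right Steenrod action on `Γ`: `SqG n x = x·Sq^n`. -/
def SqG (n : ℕ) (x : Gam) : Gam :=
  Finsupp.sum x.coeff fun w c => c • sqWord (FreeMonoid.toList w) n

/-- `x` is homogeneous of length `s` (i.e. `x ∈ Γ_s`). -/
def homLen (s : ℕ) (x : Gam) : Prop :=
  ∀ w ∈ x.coeff.support, (FreeMonoid.toList w).length = s

/-!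
Comparing coefficients of the leading letter `[j]`, `j ≥ 1`, in `xSq² = Σ_i ([i]·x_i)Sq²` via the
Cartan formula, only `[j]Sq⁰`, `[j+1]Sq¹` and `[j+2]Sq²` contribute, since `[j+p]Sq^p = C(j,p)[j]`:
`x_jSq² + C(j,1)·x_{j+1}Sq¹ + C(j,2)·x_{j+2} = 0`. Modulo 2, `C(j,1) ≡ j` and, by Lucas,
`C(j,2) ≡ ⌊j/2⌋`; the cases `j = 4m−3, 4m−2, 4m−1, 4m` are the four identities.
-/

instance : CharP Gam 2 := charP_of_injective_algebraMap' (ZMod 2) 2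

def sqLin (n : ℕ) : Gam →ₗ[ZMod 2] Gam :=
  (Finsupp.lsum (ZMod 2) fun w =>
    LinearMap.toSpanSingleton (ZMod 2) Gam (sqWord (FreeMonoid.toList w) n))
  ∘ₗ (MonoidAlgebra.coeffLinearEquiv (ZMod 2)).toLinearMap

theorem SqG_eq_sqLin (n : ℕ) (x : Gam) : SqG n x = sqLin n x := rfl

theorem sqLin_single (n : ℕ) (w : FreeMonoid ℕ) (c : ZMod 2) :
    sqLin n (MonoidAlgebra.single w c) = c • sqWord (FreeMonoid.toList w) n := by
  simp [sqLin, MonoidAlgebra.coeffLinearEquiv_apply]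

theorem gen_mul_single (a : ℕ) (w : FreeMonoid ℕ) (c : ZMod 2) :
    gen a * MonoidAlgebra.single w c
      = MonoidAlgebra.single (FreeMonoid.ofList (a :: FreeMonoid.toList w)) c := by
  rw [gen, MonoidAlgebra.single_mul_single, one_mul]
  rfl

theorem sqLin_gen_mul (n a : ℕ) (y : Gam) :
    sqLin n (gen a * y) = ∑ p ∈ Finset.range (n + 1),
      ((a - p).choose p : ZMod 2) • (gen (a - p) * sqLin (n - p) y) := by
  induction y using MonoidAlgebra.induction_linear with
  | zero => simp
  | add f g hf hg => simp only [mul_add, map_add, hf, hg, smul_add, Finset.sum_add_distrib]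
  | single w c =>
      rw [gen_mul_single, sqLin_single, FreeMonoid.toList_ofList, sqWord, Finset.smul_sum]
      refine Finset.sum_congr rfl fun p _ => ?_
      rw [sqLin_single, smul_comm c, mul_smul_comm]

theorem sqWord_zero (l : List ℕ) : sqWord l 0 = MonoidAlgebra.single (FreeMonoid.ofList l) 1 := by
  induction l with
  | nil => rfl
  | cons a t ih => simp [sqWord, ih, gen_mul_single]

theorem sqLin_zero (y : Gam) : sqLin 0 y = y := by
  induction y using MonoidAlgebra.induction_linear with
  | zero => simp
  | add f g hf hg => rw [map_add, hf, hg]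
  | single w c => simp [sqLin_single, sqWord_zero]

def leftCoeffWord (j : ℕ) : List ℕ → Gam
  | [] => 0
  | a :: t => if a = j then MonoidAlgebra.single (FreeMonoid.ofList t) 1 else 0

-- `leftCoeff j x` is the component `x_j` in the decomposition `x = Σ_i [i]·x_i`.
def leftCoeff (j : ℕ) : Gam →ₗ[ZMod 2] Gam :=
  (Finsupp.lsum (ZMod 2) fun w =>
    LinearMap.toSpanSingleton (ZMod 2) Gam (leftCoeffWord j (FreeMonoid.toList w)))
  ∘ₗ (MonoidAlgebra.coeffLinearEquiv (ZMod 2)).toLinearMap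

theorem leftCoeff_gen_mul (j a : ℕ) (y : Gam) :
    leftCoeff j (gen a * y) = if a = j then y else 0 := by
  induction y using MonoidAlgebra.induction_linear with
  | zero => simp
  | add f g hf hg => rw [mul_add, map_add, hf, hg]; split_ifs <;> simp
  | single w c =>
      simp [leftCoeff, MonoidAlgebra.coeffLinearEquiv_apply, gen_mul_single, leftCoeffWord]

theorem leftCoeff_sqLin_gen_mul {j : ℕ} (hj : j ≠ 0) (n a : ℕ) (y : Gam) :
    leftCoeff j (sqLin n (gen a * y)) = ∑ p ∈ Finset.range (n + 1),
      if a = j + p then (j.choose p : ZMod 2) • sqLin (n - p) y else 0 := by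
  rw [sqLin_gen_mul, map_sum]
  refine Finset.sum_congr rfl fun p _ => ?_
  rw [map_smul, leftCoeff_gen_mul]
  -- `a - p = j` with `j ≠ 0` rules out truncated subtraction
  by_cases ha : a = j + p
  · simp [ha]
  · rw [if_neg (by omega), if_neg ha, smul_zero]

theorem leftCoeff_sqLin_finsum {j : ℕ} (hj : j ≠ 0) (n : ℕ) {x_ : ℕ → Gam}
    (hfin : (Function.support x_).Finite) :
    leftCoeff j (sqLin n (∑ᶠ i, gen i * x_ i)) =
      ∑ p ∈ Finset.range (n + 1), (j.choose p : ZMod 2) • sqLin (n - p) (x_ (j + p)) := by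
  classical
  have hsupp : Function.support (fun i => gen i * x_ i) ⊆ hfin.toFinset := by
    intro i hi
    simpa using right_ne_zero_of_mul hi
  rw [finsum_eq_finsetSum_of_support_subset _ hsupp, map_sum, map_sum]
  simp_rw [leftCoeff_sqLin_gen_mul hj]
  rw [Finset.sum_comm]
  refine Finset.sum_congr rfl fun p _ => ?_
  rw [Finset.sum_ite_eq']
  split_ifs with hp
  · rfl
  · rw [show x_ (j + p) = 0 by simpa using hp, map_zero, smul_zero]

theorem natCast_choose_two_zmod_two (n : ℕ) : (n.choose 2 : ZMod 2) = (n / 2 : ℕ) := by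
  rw [ZMod.natCast_eq_natCast_iff]
  simpa using Choose.choose_modEq_choose_mod_mul_choose_div_nat (n := n) (k := 2) (p := 2)

theorem SqG_two_relation {x_ : ℕ → Gam} (hfin : (Function.support x_).Finite)
    (hker : SqG 2 (∑ᶠ i, gen i * x_ i) = 0) {j a b : ℕ} (hj : j ≠ 0) (ha : j % 2 = a)
    (hb : j / 2 % 2 = b) :
    SqG 2 (x_ j) + (a : ZMod 2) • SqG 1 (x_ (j + 1)) + (b : ZMod 2) • x_ (j + 2) = 0 := by
  have h := leftCoeff_sqLin_finsum hj 2 hfin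
  rw [← SqG_eq_sqLin, hker, map_zero, Finset.sum_range_succ, Finset.sum_range_succ,
    Finset.sum_range_one, natCast_choose_two_zmod_two, ← ZMod.natCast_mod (j / 2), hb,
    Nat.choose_one_right, ← ZMod.natCast_mod j, ha] at h
  simpa [sqLin_zero, SqG_eq_sqLin] using h.symm

theorem stmt_13_general (x : Gam) (x_ : ℕ → Gam)
    (hfin : (Function.support x_).Finite)
    (hx : x = ∑ᶠ i : ℕ, gen i * x_ i)
    (hker : SqG 2 x = 0) :
    ∀ m : ℕ, 1 ≤ m →
      SqG 1 (x_ (4 * m - 2)) = SqG 2 (x_ (4 * m - 3)) ∧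
      x_ (4 * m) = SqG 2 (x_ (4 * m - 2)) ∧
      x_ (4 * m + 1) = SqG 2 (x_ (4 * m - 1)) + SqG 1 (x_ (4 * m)) ∧
      SqG 2 (x_ (4 * m)) = 0 := by
  intro m hm
  obtain ⟨k, rfl⟩ : ∃ k, m = k + 1 := ⟨m - 1, by omega⟩
  rw [show 4 * (k + 1) - 3 = 4 * k + 1 by omega, show 4 * (k + 1) - 2 = 4 * k + 2 by omega,
    show 4 * (k + 1) - 1 = 4 * k + 3 by omega, show 4 * (k + 1) = 4 * k + 4 by omega]
  subst hx
  have r1 := SqG_two_relation hfin hker (j := 4 * k + 1) (a := 1) (b := 0)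
    (by omega) (by omega) (by omega)
  have r2 := SqG_two_relation hfin hker (j := 4 * k + 2) (a := 0) (b := 1)
    (by omega) (by omega) (by omega)
  have r3 := SqG_two_relation hfin hker (j := 4 * k + 3) (a := 1) (b := 1)
    (by omega) (by omega) (by omega)
  have r4 := SqG_two_relation hfin hker (j := 4 * k + 4) (a := 0) (b := 0)
    (by omega) (by omega) (by omega)
  simp only [Nat.add_assoc, Nat.reduceAdd, Nat.cast_one, Nat.cast_zero, one_smul, zero_smul,
    add_zero, CharTwo.add_eq_zero] at r1 r2 r3 r4 ⊢
  exact ⟨r1.symm, r2.symm, r3.symm, r4⟩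

/-- If `x = Σ_{i≥1} [i]·x_i ∈ Γ_s` (`s ≥ 2`) satisfies `xSq² = 0`, then for
each `m ≥ 1`: `x_{4m−2}Sq¹ = x_{4m−3}Sq²`, `x_{4m} = x_{4m−2}Sq²`,
`x_{4m+1} = x_{4m−1}Sq² + x_{4m}Sq¹`, and `x_{4m}Sq² = 0`. -/
theorem stmt_13 (s : ℕ) (hs : 2 ≤ s) (x : Gam) (x_ : ℕ → Gam)
    (hxlen : homLen s x) (hcomplen : ∀ i, homLen (s - 1) (x_ i))
    (hfin : (Function.support x_).Finite) (h0 : x_ 0 = 0)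
    (hx : x = ∑ᶠ i : ℕ, gen i * x_ i)
    (hker : SqG 2 x = 0) :
    ∀ m : ℕ, 1 ≤ m →
      SqG 1 (x_ (4 * m - 2)) = SqG 2 (x_ (4 * m - 3)) ∧
      x_ (4 * m) = SqG 2 (x_ (4 * m - 2)) ∧
      x_ (4 * m + 1) = SqG 2 (x_ (4 * m - 1)) + SqG 1 (x_ (4 * m)) ∧
      SqG 2 (x_ (4 * m)) = 0 :=
  stmt_13_general x x_ hfin hx hker
end
end

section
/- Let M be the F₂-space with basis {[a] : a ∈ ℤ} and operations Sq^{2^n} given by [a]Sq^{2^n} = c(a − 2^n, n)[a − 2^n], where c(b, n) = 1 iff b mod 2^{n+1} ∈ [2^n, 2^{n+1}). Then for every k ≥ 0 and every x ∈ M satisfying xSq^{2^i} = 0 for all 0 ≤ i ≤ k, and for every i ≤ k, x lies in the image of the composite Sq^1Sq^2⋯Sq^{2^i} (operations applied left to right). -/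
/-!
`ψ^{2^m} : [a] ↦ [a + 2^m]` is a contracting homotopy for `Sq^{2^m}`, in the sense that
`ψ^{2^m} Sq^{2^m} + Sq^{2^m} ψ^{2^m} = id`, and it commutes with `Sq^{2^j}` for `j < m`.
So if `x` is killed by `Sq^1, …, Sq^{2^i}`, then so is `xψ^{2^i}⋯ψ^{2^{j+1}}` by
`Sq^{2^j}`, and applying `Sq^{2^j}` to `xψ^{2^i}⋯ψ^{2^j}` strips off the last shift.
Hence `y = xψ^{2^i}⋯ψ^1` satisfies `y Sq^1 Sq^2 ⋯ Sq^{2^i} = x`.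
-/

noncomputable section

/-- The F₂-vector space with basis `{[a] : a ∈ ℤ}` (the dual `∇₁` of `F₂[t,t⁻¹]`). -/
abbrev Nabla : Type := ℤ →₀ ZMod 2

/-- `c(b, n) = 1` iff `b mod 2^(n+1) ∈ [2^n, 2^(n+1))`. -/
def cc (b : ℤ) (n : ℕ) : ZMod 2 :=
  if (2 : ℤ) ^ n ≤ b % 2 ^ (n + 1) then 1 else 0

/-- The operation `Sq^{2^n}` on `∇₁`: `[a]Sq^{2^n} = c(a − 2^n, n)·[a − 2^n]`. -/
def sqN (n : ℕ) (x : Nabla) : Nabla :=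
  x.sum fun a co => co • (cc (a - 2 ^ n) n • Finsupp.single (a - 2 ^ n) (1 : ZMod 2))

/-- `sqIter i y = y·Sq^{2^0}·Sq^{2^1}⋯Sq^{2^i}`: the composite `Sq^1Sq^2⋯Sq^{2^i}`
applied left to right (as a right action, `Sq^1` first). -/
def sqIter : ℕ → Nabla → Nabla
  | 0, y => sqN 0 y
  | i + 1, y => sqN (i + 1) (sqIter i y)

def shift (m : ℕ) : Nabla →ₗ[ZMod 2] Nabla :=
  Finsupp.lmapDomain (ZMod 2) (ZMod 2) (· + 2 ^ m)

lemma shift_single (m : ℕ) (a : ℤ) (c : ZMod 2) :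
    shift m (Finsupp.single a c) = Finsupp.single (a + 2 ^ m) c :=
  Finsupp.mapDomain_single

lemma sqN_zero (n : ℕ) : sqN n 0 = 0 := Finsupp.sum_zero_index

lemma sqN_add (n : ℕ) (x y : Nabla) : sqN n (x + y) = sqN n x + sqN n y :=
  Finsupp.sum_add_index (fun _ _ => zero_smul _ _) (fun _ _ c₁ c₂ => add_smul c₁ c₂ _)

lemma sqN_single (n : ℕ) (a : ℤ) (c : ZMod 2) :
    sqN n (Finsupp.single a c) = Finsupp.single (a - 2 ^ n) (cc (a - 2 ^ n) n * c) := by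
  rw [sqN, Finsupp.sum_single_index (by rw [zero_smul]), Finsupp.smul_single, Finsupp.smul_single,
    smul_eq_mul, smul_eq_mul, mul_one, mul_comm]

lemma cc_add_two_pow {j m : ℕ} (h : j < m) (b : ℤ) : cc (b + 2 ^ m) j = cc b j := by
  obtain ⟨d, rfl⟩ := Nat.exists_eq_add_of_lt h
  rw [cc, cc, show j + d + 1 = (j + 1) + d by omega, pow_add, Int.add_mul_emod_self_left]

lemma le_sub_emod_two_mul_iff {N : ℤ} (hN : 0 < N) (b : ℤ) :
    N ≤ (b - N) % (2 * N) ↔ b % (2 * N) < N := by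
  have h₀ := Int.emod_nonneg b (show 2 * N ≠ 0 by omega)
  have h₁ := Int.emod_lt_of_pos b (show 0 < 2 * N by omega)
  rw [Int.sub_emod, Int.emod_eq_of_lt (show 0 ≤ N by omega) (show N < 2 * N by omega)]
  by_cases hb : N ≤ b % (2 * N)
  · rw [Int.emod_eq_of_lt (by omega) (by omega)]
    omega
  · rw [← Int.add_mul_emod_self_left _ (2 * N) 1, Int.emod_eq_of_lt (by omega) (by omega)]
    omega

lemma cc_eq_cc_sub_two_pow_add_one (b : ℤ) (m : ℕ) : cc b m = cc (b - 2 ^ m) m + 1 := by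
  have hflip := le_sub_emod_two_mul_iff (show (0 : ℤ) < 2 ^ m by positivity) b
  rw [← pow_succ'] at hflip
  unfold cc
  split_ifs <;> first | rfl | omega

lemma sqN_shift_of_lt {j m : ℕ} (h : j < m) (x : Nabla) :
    sqN j (shift m x) = shift m (sqN j x) := by
  induction x using Finsupp.induction_linear with
  | zero => rw [map_zero, sqN_zero, map_zero]
  | add x y hx hy => rw [map_add, sqN_add, sqN_add, map_add, hx, hy]
  | single a c =>
      rw [shift_single, sqN_single, sqN_single, shift_single, add_sub_right_comm,
        cc_add_two_pow h]

lemma sqN_shift_self (m : ℕ) (x : Nabla) : sqN m (shift m x) = x + shift m (sqN m x) := by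
  induction x using Finsupp.induction_linear with
  | zero => rw [map_zero, sqN_zero, map_zero, add_zero]
  | add x y hx hy => rw [map_add, sqN_add, sqN_add, map_add, hx, hy]; abel
  | single a c =>
      rw [shift_single, sqN_single, sqN_single, shift_single, add_sub_cancel_right,
        sub_add_cancel, cc_eq_cc_sub_two_pow_add_one, add_one_mul, Finsupp.single_add, add_comm]

lemma sqN_shift_self_of_sqN_eq_zero {m : ℕ} {x : Nabla} (hx : sqN m x = 0) :
    sqN m (shift m x) = x := by
  rw [sqN_shift_self, hx, map_zero, add_zero]

/-- `shiftChain i x = x ψ^{2^i} ψ^{2^{i-1}} ⋯ ψ^1`. -/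
def shiftChain : ℕ → Nabla → Nabla
  | 0, x => shift 0 x
  | i + 1, x => shiftChain i (shift (i + 1) x)

lemma sqIter_shiftChain (i : ℕ) {x : Nabla} (hx : ∀ j ≤ i, sqN j x = 0) :
    sqIter i (shiftChain i x) = x := by
  induction i generalizing x with
  | zero => exact sqN_shift_self_of_sqN_eq_zero (hx 0 le_rfl)
  | succ i ih =>
      have hshift : ∀ j ≤ i, sqN j (shift (i + 1) x) = 0 := fun j hj => by
        rw [sqN_shift_of_lt (Nat.lt_succ_of_le hj), hx j (by omega), map_zero]
      rw [shiftChain, sqIter, ih hshift, sqN_shift_self_of_sqN_eq_zero (hx (i + 1) le_rfl)]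

/-- If `x ∈ ∇₁` satisfies `xSq^{2^i} = 0` for all `i ≤ k`, then for every `i ≤ k`,
`x` lies in the image of the composite `Sq^1Sq^2⋯Sq^{2^i}`. -/
theorem stmt_19 (k : ℕ) (x : Nabla) (hx : ∀ i ≤ k, sqN i x = 0) :
    ∀ i ≤ k, ∃ y : Nabla, sqIter i y = x :=
  fun i hi => ⟨shiftChain i x, sqIter_shiftChain i fun j hj => hx j (hj.trans hi)⟩
end
end
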